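/- arXiv:2107.11280 — 4 statements merged into one kernel-verified Lean document; each statement's English description precedes it below -/
import Mathlib

section
/- For any set U of finite words over Σ, the set U^ω is the greatest fixed point of the operator X ↦ L ∪ (U \ {ε})·X on the powerset of Σ^{≤ω}, where L = U* if ε ∈ U and L = ∅ otherwise. -/
/-- Finite or infinite words over `σ`. -/
def FIWord (σ : Type) : Type := List σ ⊕ Stream' σ

/-- Concatenation of a finite word with a finite-or-infinite word. -/
def wcat {σ : Type} (u : List σ) : FIWord σ → FIWord σ
  | Sum.inl v => Sum.inl (u ++ v)
  | Sum.inr s => Sum.inr (u ++ₛ s)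

/-- Elementwise concatenation of two languages of finite words. -/
def lcatF {σ : Type} (U V : Set (List σ)) : Set (List σ) :=
  {w | ∃ u ∈ U, ∃ v ∈ V, w = u ++ v}

/-- Elementwise concatenation of a language of finite words with a language of
finite-or-infinite words. -/
def lcat {σ : Type} (U : Set (List σ)) (V : Set (FIWord σ)) : Set (FIWord σ) :=
  {w | ∃ u ∈ U, ∃ v ∈ V, w = wcat u v}

/-- Kleene star of a language of finite words. -/
def star {σ : Type} (U : Set (List σ)) : Set (List σ) :=
  {w | ∃ L : List (List σ), (∀ u ∈ L, u ∈ U) ∧ w = L.flatten}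

/-- Concatenation `f 0 ++ f 1 ++ ⋯ ++ f (n-1)`. -/
def prefixCat {σ : Type} (f : ℕ → List σ) : ℕ → List σ
  | 0 => []
  | n + 1 => prefixCat f n ++ f n

open Classical in
/-- The finite-or-infinite word `f 0 f 1 f 2 ⋯` obtained by concatenating all
the finite words `f i`. -/
noncomputable def flattenWords {σ : Type} [Inhabited σ] (f : ℕ → List σ) : FIWord σ :=
  if h : ∃ N, ∀ n, N ≤ n → f n = [] then Sum.inl (prefixCat f h.choose)
  else Sum.inr (fun k => (prefixCat f (sInf {n | k < (prefixCat f n).length})).getD k default)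

/-- `U^ω`: the set of countably infinite concatenations of elements of `U`. -/
noncomputable def omegaPow {σ : Type} [Inhabited σ] (U : Set (List σ)) : Set (FIWord σ) :=
  {w | ∃ f : ℕ → List σ, (∀ i, f i ∈ U) ∧ w = flattenWords f}

/-!
Write `Ω = U^ω` and `F X = L ∪ (U \ {ε})·X`. The set `Ω` is closed under prefixing by
words of `U` and contains `U*` when `ε ∈ U`, so `F Ω ⊆ Ω`. Conversely, a word of `Ω` either
has only empty factors (then `ε ∈ U` and the word is `ε ∈ L`) or splits off its first
nonempty factor, so `Ω ⊆ F Ω`.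

For maximality let `X ⊆ F X`. A word of `X \ Ω` is not in `L ⊆ Ω`, so it is `u·v` with
`u ∈ U \ {ε}` and `v ∈ X`, and `v ∉ Ω` by closure under prefixing. Iterating, every word of
`X \ Ω` has arbitrarily long prefixes `u₀u₁⋯uₙ` with nonempty `uᵢ ∈ U`; since their
lengths are unbounded, the word is the infinite concatenation `u₀u₁⋯ ∈ Ω`. Hence
`X \ Ω = ∅`.
-/

section Words

variable {σ : Type}

theorem wcat_nil (w : FIWord σ) : wcat [] w = w := by
  cases w <;> rfl

theorem wcat_append (u v : List σ) (w : FIWord σ) :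
    wcat (u ++ v) w = wcat u (wcat v w) := by
  cases w with
  | inl l => exact congrArg Sum.inl (List.append_assoc u v l)
  | inr s => exact congrArg Sum.inr (Stream'.append_append_stream u v s)

theorem prefixCat_succ' (f : ℕ → List σ) (n : ℕ) :
    prefixCat f (n + 1) = f 0 ++ prefixCat (fun k => f (k + 1)) n := by
  induction n with
  | zero => simp [prefixCat]
  | succ n ih => rw [prefixCat, ih, prefixCat, List.append_assoc]

theorem prefixCat_prefix_of_le (f : ℕ → List σ) {m n : ℕ} (h : m ≤ n) :
    prefixCat f m <+: prefixCat f n := by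
  induction n, h using Nat.le_induction with
  | base => exact List.prefix_refl _
  | succ n _ ih => exact ih.trans (List.prefix_append _ _)

theorem prefixCat_eq_of_le {f : ℕ → List σ} {N : ℕ} (hN : ∀ n, N ≤ n → f n = []) {m : ℕ}
    (hm : N ≤ m) : prefixCat f m = prefixCat f N := by
  induction m, hm using Nat.le_induction with
  | base => rfl
  | succ m hm ih => rw [prefixCat, ih, hN m hm, List.append_nil]

theorem exists_length_prefixCat_gt {f : ℕ → List σ} (h : ¬∃ N, ∀ n, N ≤ n → f n = [])
    (n : ℕ) : ∃ m, (prefixCat f n).length < (prefixCat f m).length := by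
  push Not at h
  obtain ⟨m, hnm, hm⟩ := h n
  refine ⟨m + 1, ?_⟩
  have hle := (prefixCat_prefix_of_le f hnm).length_le
  have hpos := List.length_pos_iff.mpr hm
  simp only [prefixCat, List.length_append]
  omega

theorem exists_lt_length_prefixCat {f : ℕ → List σ} (h : ¬∃ N, ∀ n, N ≤ n → f n = [])
    (k : ℕ) : ∃ n, k < (prefixCat f n).length := by
  induction k with
  | zero => exact exists_length_prefixCat_gt h 0
  | succ k ih =>
    obtain ⟨n, hn⟩ := ih
    obtain ⟨m, hm⟩ := exists_length_prefixCat_gt h n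
    exact ⟨m, by omega⟩

theorem exists_eq_inr_of_forall_wcat_prefixCat {f : ℕ → List σ}
    (h : ¬∃ N, ∀ n, N ≤ n → f n = []) {w : FIWord σ}
    (hw : ∀ n, ∃ v, w = wcat (prefixCat f n) v) :
    ∃ s, w = Sum.inr s ∧ ∀ n, ∃ t, s = prefixCat f n ++ₛ t := by
  cases w with
  | inl l =>
    obtain ⟨n, hn⟩ := exists_lt_length_prefixCat h l.length
    obtain ⟨v | t, hv⟩ := hw n
    · have hl : l = prefixCat f n ++ v := Sum.inl.inj hv
      simp only [hl, List.length_append] at hn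
      omega
    · cases hv
  | inr s =>
    refine ⟨s, rfl, fun n => ?_⟩
    obtain ⟨v | t, hv⟩ := hw n
    · cases hv
    · exact ⟨t, Sum.inr.inj hv⟩

theorem eq_of_forall_wcat_prefixCat {f : ℕ → List σ} (h : ¬∃ N, ∀ n, N ≤ n → f n = [])
    {w w' : FIWord σ} (hw : ∀ n, ∃ v, w = wcat (prefixCat f n) v)
    (hw' : ∀ n, ∃ v, w' = wcat (prefixCat f n) v) : w = w' := by
  obtain ⟨s, rfl, hs⟩ := exists_eq_inr_of_forall_wcat_prefixCat h hw
  obtain ⟨s', rfl, hs'⟩ := exists_eq_inr_of_forall_wcat_prefixCat h hw'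
  congr 1
  ext k
  obtain ⟨n, hn⟩ := exists_lt_length_prefixCat h k
  obtain ⟨t, rfl⟩ := hs n
  obtain ⟨t', ht'⟩ := hs' n
  rw [ht', Stream'.get_append_left _ _ _ hn, Stream'.get_append_left _ _ _ hn]

end Words

section Flatten

variable {σ : Type} [Inhabited σ]

theorem flattenWords_of_eventually_nil {f : ℕ → List σ} {N : ℕ}
    (hN : ∀ n, N ≤ n → f n = []) : flattenWords f = Sum.inl (prefixCat f N) := by
  have h : ∃ N, ∀ n, N ≤ n → f n = [] := ⟨N, hN⟩
  rw [show flattenWords f = Sum.inl (prefixCat f h.choose) from dif_pos h,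
    ← prefixCat_eq_of_le h.choose_spec (le_max_right N _),
    prefixCat_eq_of_le hN (le_max_left _ _)]

theorem exists_flattenWords_eq_wcat_prefixCat (f : ℕ → List σ) (m : ℕ) :
    ∃ v, flattenWords f = wcat (prefixCat f m) v := by
  by_cases h : ∃ N, ∀ n, N ≤ n → f n = []
  · obtain ⟨N, hN⟩ := h
    rw [flattenWords_of_eventually_nil hN]
    rcases le_total m N with hmN | hNm
    · obtain ⟨t, ht⟩ := prefixCat_prefix_of_le f hmN
      exact ⟨Sum.inl t, by rw [← ht]; rfl⟩
    · refine ⟨Sum.inl [], ?_⟩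
      rw [prefixCat_eq_of_le hN hNm]
      exact congrArg Sum.inl (List.append_nil _).symm
  · set s : Stream' σ :=
      fun k => (prefixCat f (sInf {n | k < (prefixCat f n).length})).getD k default
    rw [show flattenWords f = Sum.inr s from dif_neg h]
    have htake : s.take (prefixCat f m).length = prefixCat f m := by
      refine List.ext_getElem (by simp) fun k hk _ => ?_
      have hk' : k < (prefixCat f m).length := by simpa using hk
      have hmin : m ∈ {n | k < (prefixCat f n).length} := hk'
      have hmem : k < (prefixCat f (sInf {n | k < (prefixCat f n).length})).length :=
        Nat.sInf_mem ⟨m, hmin⟩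
      rw [Stream'.take_get]
      show (prefixCat f _).getD k default = _
      rw [List.getD_eq_getElem _ _ hmem]
      exact (prefixCat_prefix_of_le f (Nat.sInf_le hmin)).getElem hmem
    refine ⟨Sum.inr (s.drop (prefixCat f m).length), congrArg Sum.inr ?_⟩
    conv_lhs => rw [← Stream'.append_take_drop (prefixCat f m).length s, htake]

theorem flattenWords_eq_wcat_head (f : ℕ → List σ) :
    flattenWords f = wcat (f 0) (flattenWords fun k => f (k + 1)) := by
  by_cases h : ∃ N, ∀ n, N ≤ n → f n = []
  · obtain ⟨N, hN⟩ := h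
    rw [flattenWords_of_eventually_nil (N := N + 1) fun n hn => hN n (by omega),
      flattenWords_of_eventually_nil (N := N) fun n hn => hN (n + 1) (by omega),
      prefixCat_succ']
    rfl
  · refine eq_of_forall_wcat_prefixCat h (exists_flattenWords_eq_wcat_prefixCat f) fun n => ?_
    cases n with
    | zero => exact ⟨_, (wcat_nil _).symm⟩
    | succ n =>
      obtain ⟨v, hv⟩ := exists_flattenWords_eq_wcat_prefixCat (fun k => f (k + 1)) n
      exact ⟨v, by rw [hv, prefixCat_succ', wcat_append]⟩

end Flatten

section OmegaPow

variable {σ : Type} [Inhabited σ] {U : Set (List σ)}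

theorem wcat_mem_omegaPow {u : List σ} {w : FIWord σ} (hu : u ∈ U) (hw : w ∈ omegaPow U) :
    wcat u w ∈ omegaPow U := by
  obtain ⟨f, hf, rfl⟩ := hw
  let g : ℕ → List σ := fun | 0 => u | k + 1 => f k
  exact ⟨g, fun | 0 => hu | k + 1 => hf k, (flattenWords_eq_wcat_head g).symm⟩

theorem inl_nil_mem_omegaPow (hU : [] ∈ U) : (Sum.inl [] : FIWord σ) ∈ omegaPow U :=
  ⟨fun _ => [], fun _ => hU, (flattenWords_of_eventually_nil (N := 0) fun _ _ => rfl).symm⟩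

theorem inl_star_subset_omegaPow (hU : [] ∈ U) : Sum.inl '' star U ⊆ omegaPow U := by
  rintro _ ⟨_, ⟨L, hL, rfl⟩, rfl⟩
  induction L with
  | nil => exact inl_nil_mem_omegaPow hU
  | cons u L ih =>
    exact wcat_mem_omegaPow (hL u List.mem_cons_self)
      (ih fun v hv => hL v (List.mem_cons_of_mem u hv))

theorem flattenWords_mem_lcat_omegaPow {f : ℕ → List σ} (hf : ∀ i, f i ∈ U) {n : ℕ}
    (hn : f n ≠ []) : flattenWords f ∈ lcat (U \ {[]}) (omegaPow U) := by
  have head_ne_nil : ∀ g : ℕ → List σ, (∀ i, g i ∈ U) → g 0 ≠ [] →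
      flattenWords g ∈ lcat (U \ {[]}) (omegaPow U) := fun g hg hg0 =>
    ⟨g 0, ⟨hg 0, hg0⟩, _, ⟨_, fun k => hg (k + 1), rfl⟩, flattenWords_eq_wcat_head g⟩
  induction n generalizing f with
  | zero => exact head_ne_nil f hf hn
  | succ n ih =>
    by_cases h0 : f 0 = []
    · rw [flattenWords_eq_wcat_head, h0, wcat_nil]
      exact ih (fun k => hf (k + 1)) hn
    · exact head_ne_nil f hf h0

theorem subset_omegaPow_of_subset_lcat {Z : Set (FIWord σ)} (hZ : Z ⊆ lcat (U \ {[]}) Z) :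
    Z ⊆ omegaPow U := by
  intro w hw
  have step : ∀ v : Z, ∃ u : List σ, ∃ v' : Z, (u ∈ U ∧ u ≠ []) ∧ v.1 = wcat u v'.1 := by
    rintro ⟨v, hv⟩
    obtain ⟨u, hu, v', hv', rfl⟩ := hZ hv
    exact ⟨u, ⟨v', hv'⟩, hu, rfl⟩
  choose head tail hhead htail using step
  let orbit : ℕ → Z := fun n => tail^[n] ⟨w, hw⟩
  let u : ℕ → List σ := fun n => head (orbit n)
  have hprefix : ∀ n, w = wcat (prefixCat u n) (orbit n).1 := by
    intro n
    induction n with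
    | zero => exact (wcat_nil w).symm
    | succ n ih =>
      have horbit : orbit (n + 1) = tail (orbit n) := Function.iterate_succ_apply' tail n _
      rw [prefixCat, wcat_append, horbit]
      exact ih.trans (congrArg _ (htail _))
  have hinf : ¬∃ N, ∀ n, N ≤ n → u n = [] := fun ⟨N, hN⟩ =>
    (hhead (orbit N)).2 (hN N le_rfl)
  exact ⟨u, fun n => (hhead _).1,
    eq_of_forall_wcat_prefixCat hinf (fun n => ⟨_, hprefix n⟩)
      (exists_flattenWords_eq_wcat_prefixCat u)⟩

end OmegaPow

section FixedPoint

variable {σ : Type} [Inhabited σ]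

open Classical in
def omegaStep (U : Set (List σ)) (X : Set (FIWord σ)) : Set (FIWord σ) :=
  (if ([] : List σ) ∈ U then Sum.inl '' star U else ∅) ∪ lcat (U \ {[]}) X

theorem omegaStep_subset_omegaPow_union (U : Set (List σ)) (X : Set (FIWord σ)) :
    omegaStep U X ⊆ omegaPow U ∪ lcat (U \ {[]}) X := by
  refine Set.union_subset_union_left _ ?_
  split_ifs with hU
  · exact inl_star_subset_omegaPow hU
  · exact Set.empty_subset _

theorem omegaStep_omegaPow_subset (U : Set (List σ)) :
    omegaStep U (omegaPow U) ⊆ omegaPow U := by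
  intro w hw
  obtain hw | ⟨u, hu, v, hv, rfl⟩ := omegaStep_subset_omegaPow_union U _ hw
  · exact hw
  · exact wcat_mem_omegaPow hu.1 hv

theorem omegaPow_subset_omegaStep (U : Set (List σ)) :
    omegaPow U ⊆ omegaStep U (omegaPow U) := by
  rintro _ ⟨f, hf, rfl⟩
  by_cases hnil : ∀ i, f i = []
  · left
    rw [if_pos (hnil 0 ▸ hf 0), flattenWords_of_eventually_nil (N := 0) fun n _ => hnil n]
    exact ⟨[], ⟨[], List.forall_mem_nil _, rfl⟩, rfl⟩
  · push Not at hnil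
    obtain ⟨n, hn⟩ := hnil
    exact Or.inr (flattenWords_mem_lcat_omegaPow hf hn)

theorem subset_omegaPow_of_subset_omegaStep {U : Set (List σ)} {X : Set (FIWord σ)}
    (hX : X ⊆ omegaStep U X) : X ⊆ omegaPow U := by
  have hZ : X \ omegaPow U ⊆ lcat (U \ {[]}) (X \ omegaPow U) := by
    rintro v ⟨hvX, hvΩ⟩
    obtain hv | ⟨u, hu, v', hv', rfl⟩ := omegaStep_subset_omegaPow_union U X (hX hvX)
    · exact absurd hv hvΩ
    · exact ⟨u, hu, v', ⟨hv', fun h => hvΩ (wcat_mem_omegaPow hu.1 h)⟩, rfl⟩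
  intro w hw
  by_contra hwΩ
  exact hwΩ (subset_omegaPow_of_subset_lcat hZ ⟨hw, hwΩ⟩)

end FixedPoint

open Classical in
theorem omegaPow_isGreatest_fixedPoint_general {σ : Type} [Inhabited σ]
    (U : Set (List σ)) :
    IsGreatest
      {X : Set (FIWord σ) |
        (if ([] : List σ) ∈ U then Sum.inl '' star U else (∅ : Set (FIWord σ)))
          ∪ lcat (U \ {([] : List σ)}) X = X}
      (omegaPow U) :=
  ⟨(omegaStep_omegaPow_subset U).antisymm (omegaPow_subset_omegaStep U),
    fun _ hX => subset_omegaPow_of_subset_omegaStep hX.symm.subset⟩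

open Classical in
/-- `U^ω` is the greatest fixed point of `X ↦ L ∪ (U \\ {ε})·X` on the powerset
of finite-or-infinite words, where `L = U*` (embedded via `Sum.inl`) if `ε ∈ U`
and `L = ∅` otherwise. -/
theorem omegaPow_isGreatest_fixedPoint {σ : Type} [Fintype σ] [Inhabited σ]
    (U : Set (List σ)) :
    IsGreatest
      {X : Set (FIWord σ) |
        (if ([] : List σ) ∈ U then Sum.inl '' star U else (∅ : Set (FIWord σ)))
          ∪ lcat (U \ {([] : List σ)}) X = X}
      (omegaPow U) :=
  omegaPow_isGreatest_fixedPoint_general U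
end

section
/- In a Büchi abstraction, the abstraction of the Kleene star equals the star of the abstraction: α_*(A*) = (α_*(A))*, where the star on the abstract side is defined as the least fixed point A* = lfp(λX. α_*({ε}) ⊔ A·X). -/
/-- A Büchi algebra: two join-semilattices with a monotone associative
concatenation on `Mf`, a monotone action of `Mf` on `Mo`, and a monotone
ω-iteration `Mf → Mo`. -/
structure BuchiAlgebra (Mf Mo : Type*) [SemilatticeSup Mf] [SemilatticeSup Mo] where
  cat : Mf → Mf → Mf
  act : Mf → Mo → Mo
  omega : Mf → Mo
  cat_mono : ∀ {a b c d : Mf}, a ≤ b → c ≤ d → cat a c ≤ cat b d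
  act_mono : ∀ {a b : Mf} {u v : Mo}, a ≤ b → u ≤ v → act a u ≤ act b v
  omega_mono : Monotone omega
  cat_assoc : ∀ a b c : Mf, cat a (cat b c) = cat (cat a b) c
  act_assoc : ∀ (a b : Mf) (v : Mo), act a (act b v) = act (cat a b) v

/-- A Büchi abstraction: a finite Büchi algebra equipped with Galois insertions
to the powersets of finite words and of finite-or-infinite words, whose
abstraction functions are compatible with concatenation and ω-iteration. -/
structure BuchiAbstraction (σ : Type) [Inhabited σ] (Mf Mo : Type*)
    [SemilatticeSup Mf] [SemilatticeSup Mo] [Finite Mf] [Finite Mo]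
    extends BuchiAlgebra Mf Mo where
  αf : Set (List σ) → Mf
  γf : Mf → Set (List σ)
  αo : Set (FIWord σ) → Mo
  γo : Mo → Set (FIWord σ)
  gif : GaloisInsertion αf γf
  gio : GaloisInsertion αo γo
  αf_cat : ∀ A B : Set (List σ), αf (lcatF A B) = cat (αf A) (αf B)
  αo_cat : ∀ (A : Set (List σ)) (V : Set (FIWord σ)), αo (lcat A V) = act (αf A) (αo V)
  αo_omega : ∀ A : Set (List σ), αo (omegaPow A) = omega (αf A)

/-
`A*` is a fixed point of `S ↦ {ε} ∪ A·S`, and `α_*` turns unions into joins and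
concatenations into products, so `α_*(A*)` is an abstract fixed point. Conversely, if `X` is an
abstract fixed point then `γ_*(X)` contains `ε` and is closed under left concatenation with `A`
(because `α_*(A·γ_*(X)) = α_*(A)·α_*(γ_*(X)) ≤ α_*(A)·X ≤ X`), hence contains `A*`; by the Galois
connection, `α_*(A*) ≤ X`.
-/

theorem star_eq_union {σ : Type} (A : Set (List σ)) :
    star A = {([] : List σ)} ∪ lcatF A (star A) := by
  ext
  constructor
  · rintro ⟨_ | ⟨u, L⟩, hL, rfl⟩
    · exact Or.inl rfl
    · exact Or.inr ⟨u, hL u List.mem_cons_self, L.flatten,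
        ⟨L, fun v hv => hL v (List.mem_cons_of_mem u hv), rfl⟩, List.flatten_cons⟩
  · rintro (rfl | ⟨u, hu, _, ⟨L, hL, rfl⟩, rfl⟩)
    · exact ⟨[], by simp, rfl⟩
    · exact ⟨u :: L, by simpa [hu] using hL, List.flatten_cons.symm⟩

theorem star_subset_of_nil_mem_of_lcatF_subset {σ : Type} {A S : Set (List σ)}
    (hnil : [] ∈ S) (hcat : lcatF A S ⊆ S) : star A ⊆ S := by
  rintro _ ⟨L, hL, rfl⟩
  induction L with
  | nil => exact hnil
  | cons u L ih =>
    rw [List.flatten_cons]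
    exact hcat ⟨u, hL u List.mem_cons_self, L.flatten,
      ih fun v hv => hL v (List.mem_cons_of_mem u hv), rfl⟩

theorem GaloisConnection.isLeast_star {σ : Type} {M : Type*} [SemilatticeSup M]
    {α : Set (List σ) → M} {γ : M → Set (List σ)} (gc : GaloisConnection α γ)
    {cat : M → M → M} (hcat_mono : ∀ a, Monotone (cat a))
    (hα_cat : ∀ U V, α (lcatF U V) = cat (α U) (α V)) (A : Set (List σ)) :
    IsLeast {X : M | α {[]} ⊔ cat (α A) X = X} (α (star A)) := by
  refine ⟨?_, fun X (hX : α {[]} ⊔ cat (α A) X = X) => ?_⟩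
  · change _ = _
    conv_rhs => rw [star_eq_union A]
    exact (gc.l_sup.trans (congrArg _ (hα_cat A (star A)))).symm
  · have hnil : [] ∈ γ X := Set.singleton_subset_iff.mp (gc.le_u (le_sup_left.trans hX.le))
    have hcat : lcatF A (γ X) ⊆ γ X := gc.le_u <| calc
      α (lcatF A (γ X)) = cat (α A) (α (γ X)) := hα_cat A (γ X)
      _ ≤ cat (α A) X := hcat_mono _ (gc.l_u_le X)
      _ ≤ X := le_sup_right.trans hX.le
    exact gc.l_le (star_subset_of_nil_mem_of_lcatF_subset hnil hcat)

/-- In a Büchi abstraction, the abstraction of the Kleene star `α_*(A*)` is the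
least fixed point of `X ↦ α_*({ε}) ⊔ α_*(A)·X`, i.e. it equals the abstract
Kleene star `(α_*(A))* = lfp (λ X, α_*({ε}) ⊔ α_*(A)·X)`. -/
theorem abstraction_star {σ : Type} [Inhabited σ] {Mf Mo : Type*}
    [SemilatticeSup Mf] [SemilatticeSup Mo] [Finite Mf] [Finite Mo]
    (B : BuchiAbstraction σ Mf Mo) (A : Set (List σ)) :
    IsLeast {X : Mf | B.αf {([] : List σ)} ⊔ B.cat (B.αf A) X = X}
      (B.αf (star A)) :=
  B.gif.gc.isLeast_star (cat := B.cat) (fun _ _ _ h => B.cat_mono le_rfl h) B.αf_cat A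
end

section
/- Every Büchi abstraction is a Wilke algebra: for all 𝒜, ℬ ∈ M_*, 𝒜·(ℬ·𝒜)^ω = (𝒜·ℬ)^ω, and (𝒜ⁿ)^ω = 𝒜^ω for every n > 0, where 𝒜ⁿ is the n-fold product of 𝒜. -/
/-- The `n`-fold product `a^(n+1)` in a Büchi algebra. -/
def BuchiAlgebra.pow {Mf Mo : Type*} [SemilatticeSup Mf] [SemilatticeSup Mo]
    (B : BuchiAlgebra Mf Mo) (a : Mf) : ℕ → Mf
  | 0 => a
  | n + 1 => B.cat a (B.pow a n)

section

variable {σ : Type}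

theorem prefixCat_eq_of_forall_eq_nil {f : ℕ → List σ} {N n : ℕ}
    (hN : ∀ m, N ≤ m → f m = []) (h : N ≤ n) : prefixCat f n = prefixCat f N := by
  induction h with
  | refl => rfl
  | step hle ih => rw [prefixCat, hN _ hle, List.append_nil, ih]

theorem exists_le_length_prefixCat {f : ℕ → List σ} (hf : ∀ N, ∃ n, N ≤ n ∧ f n ≠ [])
    (K : ℕ) : ∃ n, K ≤ (prefixCat f n).length := by
  induction K with
  | zero => exact ⟨0, Nat.zero_le _⟩
  | succ K ih =>
    obtain ⟨N, hN⟩ := ih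
    obtain ⟨n, hNn, hn⟩ := hf N
    have hlen : (prefixCat f N).length ≤ (prefixCat f n).length :=
      (prefixCat_prefix_of_le f hNn).length_le
    have hpos : 0 < (f n).length := List.length_pos_iff.mpr hn
    exact ⟨n + 1, by simp only [prefixCat, List.length_append]; omega⟩

theorem Stream'.get_append_stream_of_lt (l : List σ) (s : Stream' σ) {k : ℕ}
    (hk : k < l.length) : (l ++ₛ s).get k = l[k] := by
  induction l generalizing k with
  | nil => simp at hk
  | cons a l ih =>
    cases k with
    | zero => rfl
    | succ k =>
      rw [Stream'.cons_append_stream, Stream'.get_succ_cons]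
      exact ih (by simpa using hk)

theorem Stream'.get_append_stream_length_add (l : List σ) (s : Stream' σ) (k : ℕ) :
    (l ++ₛ s).get (l.length + k) = s.get k := by
  rw [← Stream'.get_drop, Stream'.drop_append_stream]

def IsPrefixLimit (P : ℕ → List σ) : FIWord σ → Prop
  | Sum.inl v => (∀ n, P n <+: v) ∧ ∃ N, P N = v
  | Sum.inr s => (∀ n k (hk : k < (P n).length), s.get k = (P n)[k]) ∧
      ∀ K, ∃ n, K ≤ (P n).length

theorem isPrefixLimit_flattenWords [Inhabited σ] (f : ℕ → List σ) :
    IsPrefixLimit (prefixCat f) (flattenWords f) := by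
  by_cases h : ∃ N, ∀ n, N ≤ n → f n = []
  · rw [show flattenWords f = Sum.inl (prefixCat f h.choose) from dif_pos h]
    refine ⟨fun n => ?_, h.choose, rfl⟩
    rcases Nat.le_total n h.choose with hn | hn
    · exact prefixCat_prefix_of_le f hn
    · rw [prefixCat_eq_of_forall_eq_nil h.choose_spec hn]
  · rw [show flattenWords f = Sum.inr _ from dif_neg h]
    push Not at h
    refine ⟨fun n k hk => ?_, exists_le_length_prefixCat h⟩
    have hm : sInf {m | k < (prefixCat f m).length} ∈ {m | k < (prefixCat f m).length} :=
      Nat.sInf_mem ⟨n, hk⟩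
    change (prefixCat f _).getD k default = _
    rw [List.getD_eq_getElem _ _ hm]
    rcases Nat.le_total (sInf {m | k < (prefixCat f m).length}) n with hle | hle
    · exact (prefixCat_prefix_of_le f hle).getElem hm
    · exact ((prefixCat_prefix_of_le f hle).getElem hk).symm

theorem IsPrefixLimit.unique {P : ℕ → List σ} {w w' : FIWord σ}
    (hw : IsPrefixLimit P w) (hw' : IsPrefixLimit P w') : w = w' := by
  match w, w', hw, hw' with
  | Sum.inl v, Sum.inl v', ⟨hp, N, hN⟩, ⟨hp', N', hN'⟩ =>
    have h : v <+: v' := hN ▸ hp' N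
    rw [h.eq_of_length_le (hN' ▸ hp N').length_le]
  | Sum.inl v, Sum.inr _, ⟨hp, _⟩, ⟨_, unb⟩ | Sum.inr _, Sum.inl v, ⟨_, unb⟩, ⟨hp, _⟩ =>
    obtain ⟨n, hn⟩ := unb (v.length + 1)
    have := (hp n).length_le
    omega
  | Sum.inr s, Sum.inr s', ⟨hs, unb⟩, ⟨hs', _⟩ =>
    refine congrArg Sum.inr (Stream'.ext fun k => ?_)
    obtain ⟨n, hn⟩ := unb (k + 1)
    rw [hs n k hn, hs' n k hn]

theorem IsPrefixLimit.of_cofinal {P Q : ℕ → List σ} {w : FIWord σ}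
    (hPQ : ∀ n, ∃ m, P n <+: Q m) (hQP : ∀ m, ∃ n, Q m <+: P n)
    (hw : IsPrefixLimit P w) : IsPrefixLimit Q w := by
  match w, hw with
  | Sum.inl v, ⟨hp, N, hN⟩ =>
    have hQ : ∀ m, Q m <+: v := fun m => (hQP m).elim fun n hn => hn.trans (hp n)
    obtain ⟨m, hm⟩ := hPQ N
    exact ⟨hQ, m, (hQ m).eq_of_length_le (hN ▸ hm).length_le⟩
  | Sum.inr s, ⟨hs, unb⟩ =>
    refine ⟨fun m k hk => ?_, fun K => ?_⟩
    · obtain ⟨n, hn⟩ := hQP m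
      rw [hs n k (lt_of_lt_of_le hk hn.length_le), hn.getElem hk]
    · obtain ⟨n, hn⟩ := unb K
      obtain ⟨m, hm⟩ := hPQ n
      exact ⟨m, hn.trans hm.length_le⟩

theorem IsPrefixLimit.wcat {P : ℕ → List σ} {w : FIWord σ} (u : List σ)
    (hw : IsPrefixLimit P w) : IsPrefixLimit (fun n => u ++ P n) (wcat u w) := by
  match w, hw with
  | Sum.inl v, ⟨hp, N, hN⟩ =>
    exact ⟨fun n => (List.prefix_append_right_inj u).mpr (hp n), N, congrArg (u ++ ·) hN⟩
  | Sum.inr s, ⟨hs, unb⟩ =>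
    refine ⟨fun n k hk => ?_, fun K => (unb K).imp fun n hn => ?_⟩
    · rcases Nat.lt_or_ge k u.length with hku | hku
      · rw [Stream'.get_append_stream_of_lt u s hku, List.getElem_append_left hku]
      · obtain ⟨j, rfl⟩ := Nat.exists_eq_add_of_le hku
        simp only [List.length_append] at hk
        rw [Stream'.get_append_stream_length_add, hs n j (by omega),
          List.getElem_append_right (by omega)]
        simp
    · simp only [List.length_append]
      omega

theorem flattenWords_eq_wcat_of_cofinal [Inhabited σ] {f g : ℕ → List σ} (u : List σ)
    (hfg : ∀ n, ∃ m, u ++ prefixCat f n <+: prefixCat g m)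
    (hgf : ∀ m, ∃ n, prefixCat g m <+: u ++ prefixCat f n) :
    flattenWords g = wcat u (flattenWords f) :=
  (isPrefixLimit_flattenWords g).unique
    (((isPrefixLimit_flattenWords f).wcat u).of_cofinal hfg hgf)

theorem flattenWords_eq_of_prefixCat_comp [Inhabited σ] {f g : ℕ → List σ} {φ : ℕ → ℕ}
    (hφ : ∀ m, m ≤ φ m) (h : ∀ m, prefixCat g (φ m) = prefixCat f m) :
    flattenWords g = flattenWords f :=
  (isPrefixLimit_flattenWords g).unique <| (isPrefixLimit_flattenWords f).of_cofinal
    (fun m => ⟨φ m, (h m).symm ▸ List.prefix_refl _⟩)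
    (fun m => ⟨m, h m ▸ prefixCat_prefix_of_le g (hφ m)⟩)

/-- Groups the word `u c₀ d₀ c₁ d₁ ⋯` as `(u c₀) (d₀ c₁) (d₁ c₂) ⋯`. -/
def regroup (u : List σ) (c d : ℕ → List σ) : ℕ → List σ
  | 0 => u ++ c 0
  | n + 1 => d n ++ c (n + 1)

theorem prefixCat_regroup_succ (u : List σ) (c d : ℕ → List σ) (n : ℕ) :
    prefixCat (regroup u c d) (n + 1) = u ++ prefixCat (fun i => c i ++ d i) n ++ c n := by
  induction n with
  | zero => simp [prefixCat, regroup]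
  | succ n ih =>
    rw [prefixCat, ih]
    simp [prefixCat, regroup]

theorem flattenWords_regroup [Inhabited σ] (u : List σ) (c d : ℕ → List σ) :
    flattenWords (regroup u c d) = wcat u (flattenWords fun i => c i ++ d i) := by
  refine flattenWords_eq_wcat_of_cofinal u (fun n => ⟨n + 1, ?_⟩) fun m => ?_
  · rw [prefixCat_regroup_succ]
    exact List.prefix_append _ _
  · cases m with
    | zero => exact ⟨0, List.nil_prefix⟩
    | succ m =>
      refine ⟨m + 1, d m, ?_⟩
      rw [prefixCat_regroup_succ]
      simp [prefixCat]

theorem lcat_omegaPow_lcatF [Inhabited σ] (A B : Set (List σ)) :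
    lcat A (omegaPow (lcatF B A)) = omegaPow (lcatF A B) := by
  ext w
  constructor
  · rintro ⟨u, hu, _, ⟨f, hf, rfl⟩, rfl⟩
    choose b hb a ha hf using hf
    obtain rfl : f = fun i => b i ++ a i := funext hf
    refine ⟨regroup u b a, fun n => ?_, (flattenWords_regroup u b a).symm⟩
    cases n with
    | zero => exact ⟨u, hu, b 0, hb 0, rfl⟩
    | succ n => exact ⟨a n, ha n, b (n + 1), hb (n + 1), rfl⟩
  · rintro ⟨f, hf, rfl⟩
    choose a ha b hb hf using hf
    obtain rfl : f = regroup (a 0) b fun i => a (i + 1) := by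
      funext n
      cases n <;> exact hf _
    rw [flattenWords_regroup]
    exact ⟨a 0, ha 0, _, ⟨_, fun n => ⟨b n, hb n, a (n + 1), ha (n + 1), rfl⟩, rfl⟩, rfl⟩

/-- `lpow A n = Aⁿ⁺¹`, indexed like `BuchiAlgebra.pow`. -/
def lpow (A : Set (List σ)) : ℕ → Set (List σ)
  | 0 => A
  | n + 1 => lcatF A (lpow A n)

theorem mem_lpow_iff {A : Set (List σ)} {n : ℕ} {w : List σ} :
    w ∈ lpow A n ↔ ∃ v : Fin (n + 1) → List σ, (∀ i, v i ∈ A) ∧ w = (List.ofFn v).flatten := by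
  induction n generalizing w with
  | zero =>
    refine ⟨fun hw => ⟨fun _ => w, fun _ => hw, by simp⟩, ?_⟩
    rintro ⟨v, hv, rfl⟩
    simpa [lpow] using hv 0
  | succ n ih =>
    constructor
    · rintro ⟨u, hu, w', hw', rfl⟩
      obtain ⟨v, hv, rfl⟩ := ih.mp hw'
      exact ⟨Fin.cons u v, Fin.cases hu hv, by simp [List.ofFn_succ]⟩
    · rintro ⟨v, hv, rfl⟩
      exact ⟨v 0, hv 0, _, ih.mpr ⟨fun i => v i.succ, fun i => hv _, rfl⟩, by
        simp [List.ofFn_succ]⟩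

theorem prefixCat_add (f : ℕ → List σ) (s k : ℕ) :
    prefixCat f (s + k) = prefixCat f s ++ (List.ofFn fun j : Fin k => f (s + j)).flatten := by
  induction k with
  | zero => simp
  | succ k ih => rw [← Nat.add_assoc, prefixCat, ih, List.ofFn_succ']; simp

def blocks (k : ℕ) (f : ℕ → List σ) (m : ℕ) : List σ :=
  (List.ofFn fun j : Fin k => f (k * m + j)).flatten

theorem prefixCat_blocks (k : ℕ) (f : ℕ → List σ) (m : ℕ) :
    prefixCat (blocks k f) m = prefixCat f (k * m) := by
  induction m with
  | zero => rfl
  | succ m ih => rw [prefixCat, ih, Nat.mul_succ, prefixCat_add, blocks]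

theorem flattenWords_blocks [Inhabited σ] {k : ℕ} (hk : 0 < k) (f : ℕ → List σ) :
    flattenWords (blocks k f) = flattenWords f :=
  (flattenWords_eq_of_prefixCat_comp (fun m => Nat.le_mul_of_pos_left m hk)
    fun m => (prefixCat_blocks k f m).symm).symm

theorem omegaPow_lpow [Inhabited σ] (A : Set (List σ)) (n : ℕ) :
    omegaPow (lpow A n) = omegaPow A := by
  ext w
  constructor
  · rintro ⟨F, hF, rfl⟩
    choose v hv hF using fun m => mem_lpow_iff.mp (hF m)
    let g : ℕ → List σ := fun k => v (k / (n + 1)) ⟨k % (n + 1), Nat.mod_lt _ n.succ_pos⟩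
    have hg : blocks (n + 1) g = F := by
      funext m
      rw [hF m, blocks]
      congr 2
      funext j
      simp only [g, Nat.mul_add_div n.succ_pos, Nat.mul_add_mod, Nat.div_eq_of_lt j.isLt,
        Nat.mod_eq_of_lt j.isLt, Nat.add_zero]
    exact ⟨g, fun k => hv _ _, by rw [← hg, flattenWords_blocks n.succ_pos]⟩
  · rintro ⟨f, hf, rfl⟩
    exact ⟨blocks (n + 1) f, fun m => mem_lpow_iff.mpr ⟨_, fun j => hf _, rfl⟩,
      (flattenWords_blocks n.succ_pos f).symm⟩

end

theorem BuchiAbstraction.αf_lpow {σ : Type} [Inhabited σ] {Mf Mo : Type*}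
    [SemilatticeSup Mf] [SemilatticeSup Mo] [Finite Mf] [Finite Mo]
    (B : BuchiAbstraction σ Mf Mo) (A : Set (List σ)) (n : ℕ) :
    B.αf (lpow A n) = B.toBuchiAlgebra.pow (B.αf A) n := by
  induction n with
  | zero => rfl
  | succ n ih => rw [lpow, B.αf_cat, ih, BuchiAlgebra.pow]

/-- Every Büchi abstraction is a Wilke algebra: `𝒜·(ℬ·𝒜)^ω = (𝒜·ℬ)^ω` and
`(𝒜ⁿ)^ω = 𝒜^ω` for every `n > 0` (here `B.pow a n = aⁿ⁺¹`). -/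
theorem buchiAbstraction_wilke {σ : Type} [Inhabited σ] {Mf Mo : Type*}
    [SemilatticeSup Mf] [SemilatticeSup Mo] [Finite Mf] [Finite Mo]
    (B : BuchiAbstraction σ Mf Mo) :
    (∀ a b : Mf, B.act a (B.omega (B.cat b a)) = B.omega (B.cat a b)) ∧
    (∀ (a : Mf) (n : ℕ), B.omega (B.toBuchiAlgebra.pow a n) = B.omega a) := by
  constructor
  · intro a b
    obtain ⟨A, rfl⟩ := B.gif.l_surjective a
    obtain ⟨C, rfl⟩ := B.gif.l_surjective b
    rw [← B.αf_cat, ← B.αo_omega, ← B.αo_cat, lcat_omegaPow_lcatF, B.αo_omega, B.αf_cat]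
  · intro a n
    obtain ⟨A, rfl⟩ := B.gif.l_surjective a
    rw [← B.αf_lpow, ← B.αo_omega, omegaPow_lpow, B.αo_omega]
end

section
/- For the equation X = a⁺·X over the two carriers: solved in the finite Büchi algebra M_{≤ω} = {∅, {ε}, a⁺, a*, a^ω, {ε}∪a^ω, a⁺∪a^ω, a*∪a^ω} (ordered by inclusion, with concatenation the usual language concatenation restricted to these sets), the greatest solution is a⁺ ∪ a^ω; but solved in P(Σ^{≤ω}) with Σ = {a}, the greatest solution is a^ω. Hence a^ω ⊊ gfp computed in the abstraction. -/
section Example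
/-- `{ε}` as a set of finite-or-infinite words over the one-letter alphabet. -/
def epsSet : Set (FIWord Unit) := {Sum.inl ([] : List Unit)}
/-- `a⁺`: the nonempty finite words. -/
def aPlus : Set (FIWord Unit) := {w | ∃ l : List Unit, l ≠ [] ∧ w = Sum.inl l}
/-- `a*`: all finite words. -/
def aStar : Set (FIWord Unit) := {w | ∃ l : List Unit, w = Sum.inl l}
/-- `a^ω`: the infinite word `aaa…`. -/
def aOmega : Set (FIWord Unit) := Set.range Sum.inr

/-- The eight-element carrier `M_{≤ω}` of the Büchi abstraction. -/
def Mcarrier : Set (Set (FIWord Unit)) :=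
  {∅, epsSet, aPlus, aStar, aOmega, epsSet ∪ aOmega, aPlus ∪ aOmega, aStar ∪ aOmega}

/-- Abstraction into `M_{≤ω}`: the least element of the family containing a
given language. -/
def absM (X : Set (FIWord Unit)) : Set (FIWord Unit) :=
  ⋂₀ {Y | Y ∈ Mcarrier ∧ X ⊆ Y}

/-!
In `P(Σ^{≤ω})` a solution of `X = a⁺·X` contains no finite word, and `a^ω` is a solution.
In `M_{≤ω}` the language `a⁺·(a⁺ ∪ a^ω) = a^{≥2} ∪ a^ω` is not representable; its best
abstraction is `a⁺ ∪ a^ω` again, which is therefore an abstract solution, and it bounds every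
abstract solution because `a⁺·X ⊆ a⁺ ∪ a^ω` for all `X`.
-/

section Concatenation

variable {σ : Type} {U : Set (List σ)} {X : Set (FIWord σ)}

theorem lcat_range_inr_subset (U : Set (List σ)) :
    lcat U (Set.range Sum.inr) ⊆ Set.range (Sum.inr : Stream' σ → FIWord σ) := by
  rintro _ ⟨u, -, _, ⟨s, rfl⟩, rfl⟩
  exact ⟨u ++ₛ s, rfl⟩

/-- A finite word of a solution of `X = U·X` would be `u ++ l'` with `l'` a shorter finite
word of `X`, so descent on the length rules them all out. -/
theorem inl_notMem_of_lcat_eq_self (hU : [] ∉ U) (hX : lcat U X = X) (l : List σ) :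
    Sum.inl l ∉ X := by
  intro hmem
  rw [← hX] at hmem
  obtain ⟨u, hu, v, hv, hw⟩ := hmem
  cases v with
  | inr s => cases hw
  | inl l' =>
    have hl : l = u ++ l' := Sum.inl.inj hw
    have hu : 0 < u.length := List.length_pos_iff.mpr fun h => hU (h ▸ hu)
    have : l'.length < l.length := by simp only [hl, List.length_append]; omega
    exact inl_notMem_of_lcat_eq_self hU hX l' hv
termination_by l.length

end Concatenation

section OneLetter

variable {U : Set (List Unit)}

theorem lcat_subset_aPlus_union_aOmega (hU : [] ∉ U) (X : Set (FIWord Unit)) :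
    lcat U X ⊆ aPlus ∪ aOmega := by
  rintro _ ⟨u, hu, v, -, rfl⟩
  cases v with
  | inl l => exact Or.inl ⟨u ++ l, fun h => hU ((List.append_eq_nil_iff.mp h).1 ▸ hu), rfl⟩
  | inr s => exact Or.inr ⟨_, rfl⟩

theorem lcat_aOmega (hU : U.Nonempty) : lcat U aOmega = aOmega := by
  refine (lcat_range_inr_subset U).antisymm ?_
  rintro _ ⟨s, rfl⟩
  obtain ⟨u, hu⟩ := hU
  exact ⟨u, hu, Sum.inr s, ⟨s, rfl⟩, congrArg Sum.inr (funext fun _ => rfl)⟩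

theorem subset_aOmega_of_lcat_eq_self {X : Set (FIWord Unit)} (hU : [] ∉ U)
    (hX : lcat U X = X) : X ⊆ aOmega := by
  rintro (l | s) hw
  · exact absurd hw (inl_notMem_of_lcat_eq_self hU hX l)
  · exact ⟨s, rfl⟩

theorem aPlus_union_aOmega_mem_Mcarrier : aPlus ∪ aOmega ∈ Mcarrier := by
  simp [Mcarrier]

theorem absM_subset {X Y : Set (FIWord Unit)} (hY : Y ∈ Mcarrier) (hXY : X ⊆ Y) :
    absM X ⊆ Y :=
  Set.sInter_subset_of_mem ⟨hY, hXY⟩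

theorem aPlus_union_aOmega_subset_of_mem_Mcarrier {Y : Set (FIWord Unit)} (hY : Y ∈ Mcarrier)
    {l : List Unit} (hl : l ≠ []) (hlY : Sum.inl l ∈ Y) {s : Stream' Unit} (hsY : Sum.inr s ∈ Y) :
    aPlus ∪ aOmega ⊆ Y := by
  simp only [Mcarrier, Set.mem_insert_iff, Set.mem_singleton_iff] at hY
  rcases hY with rfl | rfl | rfl | rfl | rfl | rfl | rfl | rfl
  · exact hlY.elim
  · exact absurd (Sum.inl.inj hlY) hl
  · obtain ⟨_, -, h⟩ := hsY; cases h
  · obtain ⟨_, h⟩ := hsY; cases h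
  · obtain ⟨_, h⟩ := hlY; cases h
  · rcases hlY with h | ⟨_, h⟩
    · exact absurd (Sum.inl.inj h) hl
    · cases h
  · exact subset_rfl
  · exact Set.union_subset_union_left _ fun _ ⟨l, _, h⟩ => ⟨l, h⟩

theorem absM_lcat_aPlus_union_aOmega (hU : [] ∉ U) (hne : U.Nonempty) :
    absM (lcat U (aPlus ∪ aOmega)) = aPlus ∪ aOmega := by
  refine (absM_subset aPlus_union_aOmega_mem_Mcarrier
    (lcat_subset_aPlus_union_aOmega hU _)).antisymm (Set.subset_sInter fun Y ⟨hY, hsub⟩ => ?_)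
  obtain ⟨u, hu⟩ := hne
  have hfin : Sum.inl (u ++ [()]) ∈ Y :=
    hsub ⟨u, hu, Sum.inl [()], Or.inl ⟨[()], by simp, rfl⟩, rfl⟩
  have hinf : Sum.inr (u ++ₛ fun _ => ()) ∈ Y :=
    hsub ⟨u, hu, Sum.inr fun _ => (), Or.inr ⟨_, rfl⟩, rfl⟩
  exact aPlus_union_aOmega_subset_of_mem_Mcarrier hY (by simp) hfin hinf

end OneLetter

/-- For the equation `X = a⁺·X`: solved in the finite Büchi algebra `M_{≤ω}`
(using the abstracted concatenation), the greatest solution is `a⁺ ∪ a^ω`; but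
solved in `P(Σ^{≤ω})` with `Σ = {a}`, the greatest solution is `a^ω`.  Hence
`a^ω` is strictly below the gfp computed in the abstraction. -/
theorem abstraction_loses_gfp :
    IsGreatest {X | X ∈ Mcarrier ∧ absM (lcat {l : List Unit | l ≠ []} X) = X}
      (aPlus ∪ aOmega) ∧
    IsGreatest {X : Set (FIWord Unit) | lcat {l : List Unit | l ≠ []} X = X}
      aOmega ∧
    aOmega ⊂ aPlus ∪ aOmega := by
  have hU : [] ∉ {l : List Unit | l ≠ []} := fun h => h rfl
  have hne : {l : List Unit | l ≠ []}.Nonempty := ⟨[()], by simp⟩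
  refine ⟨⟨⟨aPlus_union_aOmega_mem_Mcarrier, absM_lcat_aPlus_union_aOmega hU hne⟩, ?_⟩,
    ⟨lcat_aOmega hne, fun X hX => subset_aOmega_of_lcat_eq_self hU hX⟩, ?_⟩
  · rintro X ⟨-, hX⟩
    rw [← hX]
    exact absM_subset aPlus_union_aOmega_mem_Mcarrier (lcat_subset_aPlus_union_aOmega hU _)
  · refine (Set.ssubset_iff_of_subset Set.subset_union_right).mpr ?_
    exact ⟨Sum.inl [()], Or.inl ⟨[()], by simp, rfl⟩, fun ⟨_, h⟩ => Sum.inr_ne_inl h⟩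

end Example
end
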